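/- arXiv:1607.03581 — 6 statements merged into one kernel-verified Lean document; each statement's English description precedes it below -/
import Mathlib

section
/- Let G ∈ ℝⁿˣⁿ be a lower-triangular invertible matrix with diagonal entries g_{11},…,g_{nn}, generating lattice Λ = {G b : b ∈ ℤⁿ}. Let P be any lower-triangular matrix with the same diagonal entries as G. Then for every y ∈ ℝⁿ there exist a unique b ∈ ℤⁿ and unique s ∈ [0,1)ⁿ such that y = G b + P s. In particular the parallelotope P(P) = {P s : s ∈ [0,1)ⁿ} is a fundamental region for Λ. -/
open Finset

/-- Recursive solution of the triangular system. -/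
noncomputable def tpfR {n : ℕ} (G P : Matrix (Fin n) (Fin n) ℝ) (y : Fin n → ℝ) :
    Fin n → ℝ
  | i => (y i - ∑ j ∈ (Finset.Iio i).attach,
      (G i j.1 * (⌊tpfR G P y j.1⌋ : ℝ) + P i j.1 * Int.fract (tpfR G P y j.1))) / G i i
termination_by i => i.val
decreasing_by all_goals (simp_wf; exact Finset.mem_Iio.mp j.2)

lemma tpf_comp {n : ℕ} (G P : Matrix (Fin n) (Fin n) ℝ)
    (hGtri : ∀ i j, i < j → G i j = 0)
    (hPtri : ∀ i j, i < j → P i j = 0)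
    (hdiag : ∀ i, P i i = G i i)
    (b : Fin n → ℤ) (s : Fin n → ℝ) (y : Fin n → ℝ)
    (h : y = G.mulVec (fun i => (b i : ℝ)) + P.mulVec s) (i : Fin n) :
    y i = ∑ j ∈ Finset.Iio i, (G i j * b j + P i j * s j) + G i i * (b i + s i) := by
  have hy : y i = ∑ j, (G i j * b j + P i j * s j) := by
    rw [h]
    simp [Matrix.mulVec, dotProduct, Finset.sum_add_distrib]
  rw [hy]
  have hsub : ∑ j, (G i j * b j + P i j * s j)
      = ∑ j ∈ Finset.Iic i, (G i j * b j + P i j * s j) := by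
    refine (Finset.sum_subset (Finset.subset_univ _) ?_).symm
    intro j _ hj
    have hij : i < j := by simpa using hj
    rw [hGtri i j hij, hPtri i j hij]; ring
  rw [hsub, ← Finset.Iio_insert, Finset.sum_insert (by simp)]
  rw [hdiag i]; ring

/-- Lower-triangular generator and any lower-triangular `P` with the same diagonal:
every `y` decomposes uniquely as `G b + P s` with `b ∈ ℤⁿ`, `s ∈ [0,1)ⁿ`. -/
theorem triangular_parallelotope_fundamental {n : ℕ}
    (G P : Matrix (Fin n) (Fin n) ℝ)
    (hGtri : ∀ i j, i < j → G i j = 0)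
    (hPtri : ∀ i j, i < j → P i j = 0)
    (hG : IsUnit G.det)
    (hdiag : ∀ i, P i i = G i i) :
    ∀ y : Fin n → ℝ, ∃! p : (Fin n → ℤ) × (Fin n → ℝ),
      (∀ i, 0 ≤ p.2 i ∧ p.2 i < 1) ∧
      y = G.mulVec (fun i => (p.1 i : ℝ)) + P.mulVec p.2 := by
  -- diagonal entries are nonzero
  have hdet : G.det = ∏ i, G i i := by
    apply Matrix.det_of_lowerTriangular
    intro i j hij
    exact hGtri i j (by simpa using hij)
  have hgi : ∀ i, G i i ≠ 0 := by
    rw [hdet] at hG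
    have hne := hG.ne_zero
    intro i hi
    exact hne (Finset.prod_eq_zero (Finset.mem_univ i) hi)
  intro y
  set r := tpfR G P y with hr
  -- the defining component equations of `r`
  have hcomp : ∀ i : Fin n, y i = ∑ j ∈ Finset.Iio i,
      (G i j * (⌊r j⌋ : ℝ) + P i j * Int.fract (r j)) + G i i * r i := by
    intro i
    have hrdef : r i = (y i - ∑ j ∈ (Finset.Iio i).attach,
        (G i j.1 * (⌊r j.1⌋ : ℝ) + P i j.1 * Int.fract (r j.1))) / G i i := by
      rw [hr]; rw [tpfR]
    have hsum : ∑ j ∈ (Finset.Iio i).attach,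
        (G i j.1 * (⌊r j.1⌋ : ℝ) + P i j.1 * Int.fract (r j.1))
        = ∑ j ∈ Finset.Iio i, (G i j * (⌊r j⌋ : ℝ) + P i j * Int.fract (r j)) :=
      Finset.sum_attach _ (fun j => G i j * (⌊r j⌋ : ℝ) + P i j * Int.fract (r j))
    rw [hrdef, hsum, mul_div_cancel₀ _ (hgi i)]
    ring
  refine ⟨⟨fun i => ⌊r i⌋, fun i => Int.fract (r i)⟩, ⟨?_, ?_⟩, ?_⟩
  · intro i; exact ⟨Int.fract_nonneg _, Int.fract_lt_one _⟩
  · -- existence: check componentwise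
    funext i
    have hfloor : ((⌊r i⌋ : ℝ) + Int.fract (r i)) = r i := by
      rw [Int.fract]; ring
    have hc := tpf_comp G P hGtri hPtri hdiag (fun i => ⌊r i⌋) (fun i => Int.fract (r i))
      (G.mulVec (fun i => (⌊r i⌋ : ℝ)) + P.mulVec (fun i => Int.fract (r i))) rfl i
    simp only [Pi.add_apply] at hc ⊢
    rw [hc, hfloor, ← hcomp i]
  · -- uniqueness
    rintro ⟨b, s⟩ ⟨hs, heq⟩
    have H1 := tpf_comp G P hGtri hPtri hdiag b s y heq
    have key : ∀ m : ℕ, ∀ i : Fin n, i.val = m →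
        b i = ⌊r i⌋ ∧ s i = Int.fract (r i) := by
      intro m
      induction m using Nat.strong_induction_on with
      | _ m ih =>
        intro i him
        have IH : ∀ j : Fin n, j < i → b j = ⌊r j⌋ ∧ s j = Int.fract (r j) := by
          intro j hj
          exact ih j.val (by rw [← him]; exact hj) j rfl
        have hsums : ∑ j ∈ Finset.Iio i, (G i j * b j + P i j * s j)
            = ∑ j ∈ Finset.Iio i, (G i j * (⌊r j⌋ : ℝ) + P i j * Int.fract (r j)) := by
          apply Finset.sum_congr rfl
          intro j hj
          obtain ⟨h1, h2⟩ := IH j (Finset.mem_Iio.mp hj)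
          rw [h1, h2]
        have hcancel : (b i : ℝ) + s i = r i := by
          have h1 := H1 i
          have h2 := hcomp i
          rw [hsums] at h1
          have := h1.symm.trans h2
          have hmul : G i i * ((b i : ℝ) + s i) = G i i * r i := by linarith
          exact mul_left_cancel₀ (hgi i) hmul
        have hbfloor : b i = ⌊r i⌋ := by
          have h0 : ⌊s i⌋ = 0 := Int.floor_eq_zero_iff.mpr ⟨(hs i).1, (hs i).2⟩
          rw [← hcancel, add_comm, Int.floor_add_intCast, h0]
          omega
        refine ⟨hbfloor, ?_⟩
        rw [Int.fract, ← hbfloor, ← hcancel]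
        ring
    have hbe : b = fun i => ⌊r i⌋ := funext fun i => (key i.val i rfl).1
    have hse : s = fun i => Int.fract (r i) := funext fun i => (key i.val i rfl).2
    rw [hbe, hse]
end

section
/- Let G ∈ ℝⁿˣⁿ be an invertible matrix generating lattice Λ = {G b : b ∈ ℤⁿ}. Let G' be obtained from G by replacing exactly one column with another vector such that G' is invertible and det(G) = det(G'). Then for every x ∈ ℝⁿ there exist a unique b ∈ ℤⁿ and unique s ∈ [0,1)ⁿ with x = G b + G' s; i.e., the parallelotope P(G') = {G' s : s ∈ [0,1)ⁿ} is a fundamental region for Λ. -/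
/-- If `G'` is obtained from the invertible generator `G` by replacing exactly one
column, remains invertible and has the same determinant, then every `x ∈ ℝⁿ`
decomposes uniquely as `x = G b + G' s` with `b ∈ ℤⁿ`, `s ∈ [0,1)ⁿ`; i.e. the
parallelotope of `G'` is a fundamental region for the lattice of `G`. -/
theorem column_replacement_parallelotope_fundamental {n : ℕ}
    (G G' : Matrix (Fin n) (Fin n) ℝ) (t : Fin n)
    (hG : IsUnit G.det) (hG' : IsUnit G'.det)
    (hcols : ∀ j, j ≠ t → ∀ i, G' i j = G i j)
    (hdet : G'.det = G.det) :
    ∀ x : Fin n → ℝ, ∃! p : (Fin n → ℤ) × (Fin n → ℝ),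
      (∀ i, 0 ≤ p.2 i ∧ p.2 i < 1) ∧
      x = G.mulVec (fun i => (p.1 i : ℝ)) + G'.mulVec p.2 := by
  intro x
  set A : Matrix (Fin n) (Fin n) ℝ := G'⁻¹ * G with hA
  set c : Fin n → ℝ := fun i => A i t with hc
  -- A agrees with identity off column t
  have hA_eq : A = (1 : Matrix (Fin n) (Fin n) ℝ).updateCol t c := by
    ext i j
    rcases eq_or_ne j t with rfl | hj
    · simp [Matrix.updateCol_self, hc]
    · rw [Matrix.updateCol_apply, if_neg hj]
      have : A i j = (G'⁻¹ * G') i j := by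
        simp only [hA, Matrix.mul_apply]
        exact Finset.sum_congr rfl fun k _ => by rw [hcols j hj k]
      rw [this, Matrix.nonsing_inv_mul G' hG']
  have hdetA : A.det = 1 := by
    rw [hA, Matrix.det_mul, Matrix.det_nonsing_inv, hdet, Ring.inverse_mul_cancel _ hG]
  have hct : c t = 1 := by
    have h1 : A.det = Matrix.cramer (1 : Matrix (Fin n) (Fin n) ℝ) c t := by
      rw [Matrix.cramer_apply, hA_eq]
    rw [Matrix.cramer_one, hdetA] at h1
    simpa using h1.symm
  -- key mulVec formula
  have key : ∀ (v : Fin n → ℝ) (i : Fin n),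
      A.mulVec v i = v i + c i * v t - (if i = t then v t else 0) := by
    intro v i
    have h1 : A.mulVec v i
        = ∑ j, (if j = t then c i else (1 : Matrix (Fin n) (Fin n) ℝ) i j) * v j := by
      rw [Matrix.mulVec, dotProduct]
      exact Finset.sum_congr rfl fun j _ => by rw [hA_eq, Matrix.updateCol_apply]
    have h2 : ∀ j, (if j = t then c i else (1 : Matrix (Fin n) (Fin n) ℝ) i j) * v j
        = (1 : Matrix (Fin n) (Fin n) ℝ) i j * v j
          + (if j = t then (c i - (1 : Matrix (Fin n) (Fin n) ℝ) i t) * v t else 0) := by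
      intro j
      rcases eq_or_ne j t with rfl | hj
      · simp; ring
      · simp [hj]
    rw [h1]
    simp only [h2]
    rw [Finset.sum_add_distrib, Finset.sum_ite_eq' Finset.univ t, if_pos (Finset.mem_univ t)]
    have h3 : ∑ j, (1 : Matrix (Fin n) (Fin n) ℝ) i j * v j = v i := by
      have := congrFun (Matrix.one_mulVec v) i
      rwa [Matrix.mulVec, dotProduct] at this
    rw [h3, Matrix.one_apply]
    rcases eq_or_ne i t with rfl | hi
    · simp; ring
    · simp [hi, Ne.symm hi]
  -- setup for existence
  set y : Fin n → ℝ := G'⁻¹.mulVec x with hy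
  set bt : ℤ := ⌊y t⌋ with hbt
  set b : Fin n → ℤ := fun i => if i = t then bt else ⌊y i - c i * bt⌋ with hb
  set s : Fin n → ℝ := fun i => y i - A.mulVec (fun j => (b j : ℝ)) i with hs
  have hbtt : b t = bt := if_pos rfl
  have hAbt : A.mulVec (fun j => (b j : ℝ)) t = bt := by
    rw [key, if_pos rfl, hct, hbtt]; ring
  have hAbi : ∀ i, i ≠ t → A.mulVec (fun j => (b j : ℝ)) i = b i + c i * bt := by
    intro i hi
    rw [key, if_neg hi, hbtt]; ring
  have hs_range : ∀ i, 0 ≤ s i ∧ s i < 1 := by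
    intro i
    rcases eq_or_ne i t with rfl | hi
    · have h : s i = Int.fract (y i) := by
        show y i - A.mulVec (fun j => (b j : ℝ)) i = Int.fract (y i)
        rw [hAbt, Int.fract, hbt]
      rw [h]; exact ⟨Int.fract_nonneg _, Int.fract_lt_one _⟩
    · have h : s i = Int.fract (y i - c i * bt) := by
        show y i - A.mulVec (fun j => (b j : ℝ)) i = Int.fract (y i - c i * bt)
        rw [hAbi i hi, Int.fract]
        have : b i = ⌊y i - c i * bt⌋ := if_neg hi
        rw [this]; ring
      rw [h]; exact ⟨Int.fract_nonneg _, Int.fract_lt_one _⟩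
  -- the decomposition equation, in general form
  have hGy : G'.mulVec y = x := by
    rw [hy, Matrix.mulVec_mulVec, Matrix.mul_nonsing_inv G' hG', Matrix.one_mulVec]
  have hGA : ∀ v : Fin n → ℝ, G'.mulVec (A.mulVec v) = G.mulVec v := by
    intro v
    rw [Matrix.mulVec_mulVec, hA, ← Matrix.mul_assoc, Matrix.mul_nonsing_inv G' hG',
      Matrix.one_mul]
  have hdecomp : ∀ (b' : Fin n → ℤ) (s' : Fin n → ℝ),
      x = G.mulVec (fun i => (b' i : ℝ)) + G'.mulVec s' ↔
      s' = fun i => y i - A.mulVec (fun j => (b' j : ℝ)) i := by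
    intro b' s'
    constructor
    · intro h
      have := congrArg (G'⁻¹.mulVec) h
      rw [Matrix.mulVec_add, ← hy, Matrix.mulVec_mulVec, ← hA,
        Matrix.mulVec_mulVec, Matrix.nonsing_inv_mul G' hG', Matrix.one_mulVec] at this
      funext i
      have := congrFun this i
      simp only [Pi.add_apply] at this
      linarith
    · intro h
      subst h
      have : G'.mulVec (fun i => y i - A.mulVec (fun j => (b' j : ℝ)) i)
          = G'.mulVec y - G'.mulVec (A.mulVec (fun j => (b' j : ℝ))) := by
        rw [← Matrix.mulVec_sub]; rfl
      rw [this, hGy, hGA]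
      funext i; simp
  refine ⟨(b, s), ⟨hs_range, ?_⟩, ?_⟩
  · exact (hdecomp b s).mpr rfl
  · rintro ⟨b', s'⟩ ⟨hs'_range, hx'⟩
    have hs'eq : s' = fun i => y i - A.mulVec (fun j => (b' j : ℝ)) i := (hdecomp b' s').mp hx'
    have hAb't : A.mulVec (fun j => (b' j : ℝ)) t = b' t := by
      rw [key, if_pos rfl, hct]; ring
    have h1 : y t = (b' t : ℝ) + s' t := by
      have := congrFun hs'eq t
      rw [hAb't] at this
      linarith
    have hfl : ⌊s' t⌋ = 0 := Int.floor_eq_zero_iff.mpr ⟨(hs'_range t).1, (hs'_range t).2⟩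
    have hb't : b' t = bt := by
      rw [hbt, h1, Int.floor_intCast_add, hfl, add_zero]
    have hb'eq : b' = b := by
      funext i
      rcases eq_or_ne i t with rfl | hi
      · rw [hb't, hbtt]
      · have hAb'i : A.mulVec (fun j => (b' j : ℝ)) i = (b' i : ℝ) + c i * bt := by
          rw [key, if_neg hi, hb't]; ring
        have h2 : y i - c i * bt = (b' i : ℝ) + s' i := by
          have := congrFun hs'eq i
          rw [hAb'i] at this
          linarith
        have hfl' : ⌊s' i⌋ = 0 := Int.floor_eq_zero_iff.mpr ⟨(hs'_range i).1, (hs'_range i).2⟩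
        have : b i = ⌊y i - c i * bt⌋ := if_neg hi
        rw [this, h2, Int.floor_intCast_add, hfl', add_zero]
    have hs'eq2 : s' = s := by
      rw [hs'eq, hb'eq, hs]
    exact Prod.ext hb'eq hs'eq2
end

section
/- Let Λs ⊆ Λc be full-rank lattices in ℝⁿ, Gc a generator matrix of Λc, and M = diag(M₁,…,Mₙ) with positive integers Mᵢ. If the parallelotope P(Gc·M) = {Gc M s : s ∈ [0,1)ⁿ} is a fundamental region of Λs, then the map b ↦ (Gc b mod Λs), defined on the set {b ∈ ℤⁿ : 0 ≤ bᵢ < Mᵢ}, is a bijection onto a complete set of coset representatives of Λc/Λs (equivalently, onto Λc ∩ F for any fundamental region F of Λs). -/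
/-- The lattice generated by the columns of `G`. -/
def lat {n : ℕ} (G : Matrix (Fin n) (Fin n) ℝ) : Set (Fin n → ℝ) :=
  {x | ∃ b : Fin n → ℤ, x = G.mulVec (fun i => (b i : ℝ))}

/-- `F` is a fundamental region of the lattice `L`. -/
def IsFund {n : ℕ} (L F : Set (Fin n → ℝ)) : Prop :=
  ∀ y : Fin n → ℝ, ∃! l, l ∈ L ∧ y - l ∈ F

/-- The half-open parallelotope `{P s : s ∈ [0,1)ⁿ}`. -/
def Par {n : ℕ} (P : Matrix (Fin n) (Fin n) ℝ) : Set (Fin n → ℝ) :=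
  {x | ∃ s : Fin n → ℝ, (∀ i, 0 ≤ s i ∧ s i < 1) ∧ x = P.mulVec s}

lemma castv_sub {n : ℕ} (a b : Fin n → ℤ) :
    (fun i => ((a - b) i : ℝ)) = (fun i => (a i : ℝ)) - fun i => (b i : ℝ) := by
  funext i; simp [Pi.sub_apply]

lemma castv_add {n : ℕ} (a b : Fin n → ℤ) :
    (fun i => ((a + b) i : ℝ)) = (fun i => (a i : ℝ)) + fun i => (b i : ℝ) := by
  funext i; simp [Pi.add_apply]

lemma lat_zero {n : ℕ} (G : Matrix (Fin n) (Fin n) ℝ) : (0 : Fin n → ℝ) ∈ lat G :=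
  ⟨0, by
    have : (fun i => (((0 : Fin n → ℤ) i : ℤ) : ℝ)) = (0 : Fin n → ℝ) := by
      funext i; simp
    rw [this, Matrix.mulVec_zero]⟩

lemma lat_sub {n : ℕ} {G : Matrix (Fin n) (Fin n) ℝ} {x y : Fin n → ℝ}
    (hx : x ∈ lat G) (hy : y ∈ lat G) : x - y ∈ lat G := by
  obtain ⟨a, rfl⟩ := hx; obtain ⟨b, rfl⟩ := hy
  exact ⟨a - b, by rw [castv_sub, Matrix.mulVec_sub]⟩

lemma lat_add {n : ℕ} {G : Matrix (Fin n) (Fin n) ℝ} {x y : Fin n → ℝ}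
    (hx : x ∈ lat G) (hy : y ∈ lat G) : x + y ∈ lat G := by
  obtain ⟨a, rfl⟩ := hx; obtain ⟨b, rfl⟩ := hy
  exact ⟨a + b, by rw [castv_add, Matrix.mulVec_add]⟩

lemma lat_neg {n : ℕ} {G : Matrix (Fin n) (Fin n) ℝ} {x : Fin n → ℝ}
    (hx : x ∈ lat G) : -x ∈ lat G := by
  have h := lat_sub (lat_zero G) hx
  simpa using h

/-- Key technical lemma: if `P(Gc·M)` is a fundamental region of `Λs`, then
`b ↦ (Gc b mod Λs)` is a bijection from the box `∏ᵢ {0,…,Mᵢ−1}` onto `Λc ∩ F`,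
for any fundamental region `F` of `Λs` (where `enc b` is the unique element of
`(Gc b + Λs) ∩ F`). -/
theorem rectangular_encoding_of_parallelotope_fundamental {n : ℕ}
    (Gc Gs : Matrix (Fin n) (Fin n) ℝ)
    (hGc : IsUnit Gc.det) (hGs : IsUnit Gs.det)
    (hsub : lat Gs ⊆ lat Gc)
    (M : Fin n → ℤ) (hM : ∀ i, 0 < M i)
    (hPar : IsFund (lat Gs) (Par (Gc * Matrix.diagonal (fun i => (M i : ℝ)))))
    (F : Set (Fin n → ℝ)) (hF : IsFund (lat Gs) F)
    (enc : (Fin n → ℤ) → (Fin n → ℝ))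
    (henc : ∀ b : Fin n → ℤ, enc b ∈ F ∧
      enc b - Gc.mulVec (fun i => (b i : ℝ)) ∈ lat Gs) :
    Set.BijOn enc {b : Fin n → ℤ | ∀ i, 0 ≤ b i ∧ b i < M i} (lat Gc ∩ F) := by
  have hGcinj : Function.Injective Gc.mulVec :=
    Matrix.mulVec_injective_iff_isUnit.2 ((Matrix.isUnit_iff_isUnit_det Gc).mpr hGc)
  -- box elements land in the parallelotope
  have hbox : ∀ b : Fin n → ℤ, (∀ i, 0 ≤ b i ∧ b i < M i) →
      Gc.mulVec (fun i => (b i : ℝ)) ∈ Par (Gc * Matrix.diagonal (fun i => (M i : ℝ))) := by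
    intro b hb
    refine ⟨fun i => (b i : ℝ) / (M i : ℝ), fun i => ?_, ?_⟩
    · have hMi : (0:ℝ) < (M i : ℝ) := by exact_mod_cast hM i
      have hb0 : (0:ℝ) ≤ (b i : ℝ) := by exact_mod_cast (hb i).1
      constructor
      · positivity
      · rw [div_lt_one hMi]; exact_mod_cast (hb i).2
    · rw [← Matrix.mulVec_mulVec]
      have harg : (Matrix.diagonal (fun i => (M i : ℝ))).mulVec (fun i => (b i : ℝ) / (M i : ℝ))
          = fun i => (b i : ℝ) := by
        funext i
        rw [Matrix.mulVec_diagonal]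
        have hMi : ((M i : ℝ)) ≠ 0 := by exact_mod_cast (hM i).ne'
        field_simp
      rw [harg]
  refine ⟨?_, ?_, ?_⟩
  · -- MapsTo
    intro b hb
    obtain ⟨hFb, hls⟩ := henc b
    refine ⟨?_, hFb⟩
    have h : enc b = (enc b - Gc.mulVec (fun i => (b i : ℝ))) + Gc.mulVec (fun i => (b i : ℝ)) := by
      abel
    rw [h]
    exact lat_add (hsub hls) ⟨b, rfl⟩
  · -- InjOn
    intro b1 h1 b2 h2 heq
    have hdiff : Gc.mulVec (fun i => (b1 i : ℝ)) - Gc.mulVec (fun i => (b2 i : ℝ)) ∈ lat Gs := by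
      have h := lat_sub (henc b1).2 (henc b2).2
      rw [heq] at h
      have h' := lat_neg h
      have heq2 : -((enc b2 - Gc.mulVec (fun i => (b1 i : ℝ))) -
          (enc b2 - Gc.mulVec (fun i => (b2 i : ℝ)))) =
          Gc.mulVec (fun i => (b1 i : ℝ)) - Gc.mulVec (fun i => (b2 i : ℝ)) := by abel
      rwa [heq2] at h'
    obtain ⟨l, _, huniq⟩ := hPar (Gc.mulVec (fun i => (b1 i : ℝ)))
    have e1 := huniq _ ⟨hdiff, by
      have h2' : Gc.mulVec (fun i => (b1 i : ℝ)) -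
          (Gc.mulVec (fun i => (b1 i : ℝ)) - Gc.mulVec (fun i => (b2 i : ℝ))) =
          Gc.mulVec (fun i => (b2 i : ℝ)) := by abel
      rw [h2']; exact hbox b2 h2⟩
    have e2 := huniq 0 ⟨lat_zero Gs, by
      rw [sub_zero]; exact hbox b1 h1⟩
    have h0 : Gc.mulVec (fun i => (b1 i : ℝ)) - Gc.mulVec (fun i => (b2 i : ℝ)) = 0 :=
      e1.trans e2.symm
    have heqv := hGcinj (sub_eq_zero.mp h0)
    funext i
    exact_mod_cast congrFun heqv i
  · -- SurjOn
    intro x hx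
    obtain ⟨⟨a, rfl⟩, hxF⟩ := hx
    obtain ⟨l, ⟨hlGs, hs⟩, _⟩ := hPar (Gc.mulVec (fun i => (a i : ℝ)))
    obtain ⟨c, rfl⟩ := hsub hlGs
    obtain ⟨s, hs01, hseq⟩ := hs
    set b : Fin n → ℤ := a - c with hb
    -- Gc (a - c) = Gc M s, so (a - c : ℝ) = M * s componentwise
    have key : (fun i => ((b i : ℤ) : ℝ)) = fun i => (M i : ℝ) * s i := by
      apply hGcinj
      rw [← Matrix.mulVec_mulVec] at hseq
      have hd : (Matrix.diagonal (fun i => (M i : ℝ))).mulVec s = fun i => (M i : ℝ) * s i := by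
        funext i; rw [Matrix.mulVec_diagonal]
      rw [hd] at hseq
      have hargs : (fun i => ((b i : ℤ) : ℝ)) =
          (fun i => (a i : ℝ)) - fun i => (c i : ℝ) := castv_sub a c
      rw [hargs, Matrix.mulVec_sub, hseq]
    have hbbox : ∀ i, 0 ≤ b i ∧ b i < M i := by
      intro i
      have hki := congrFun key i
      have hMi : (0:ℝ) < (M i : ℝ) := by exact_mod_cast hM i
      have hsi := hs01 i
      constructor
      · have h : (0:ℝ) ≤ ((b i : ℤ) : ℝ) := by
          rw [hki]; exact mul_nonneg hMi.le hsi.1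
        exact_mod_cast h
      · have h : ((b i : ℤ) : ℝ) < (M i : ℝ) := by
          rw [hki]
          calc (M i : ℝ) * s i < (M i : ℝ) * 1 := mul_lt_mul_of_pos_left hsi.2 hMi
            _ = M i := mul_one _
        exact_mod_cast h
    refine ⟨b, hbbox, ?_⟩
    -- show enc b = Gc a, via uniqueness in F at y = Gc b
    obtain ⟨hFb, hls⟩ := henc b
    obtain ⟨l', _, huniq⟩ := hF (Gc.mulVec (fun i => (b i : ℝ)))
    have hc1 : Gc.mulVec (fun i => (b i : ℝ)) - Gc.mulVec (fun i => (a i : ℝ)) ∈ lat Gs := by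
      have h := lat_neg hlGs
      have heq2 : Gc.mulVec (fun i => (b i : ℝ)) - Gc.mulVec (fun i => (a i : ℝ)) =
          -(Gc.mulVec (fun i => (c i : ℝ))) := by
        rw [castv_sub a c, Matrix.mulVec_sub]
        abel
      rw [heq2]
      exact h
    have e1 := huniq _ ⟨hc1, by
      have h : Gc.mulVec (fun i => (b i : ℝ)) -
          (Gc.mulVec (fun i => (b i : ℝ)) - Gc.mulVec (fun i => (a i : ℝ))) =
          Gc.mulVec (fun i => (a i : ℝ)) := by abel
      rw [h]; exact hxF⟩
    have hc2 : Gc.mulVec (fun i => (b i : ℝ)) - enc b ∈ lat Gs := by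
      have h := lat_neg hls
      have heq2 : -(enc b - Gc.mulVec (fun i => (b i : ℝ))) =
          Gc.mulVec (fun i => (b i : ℝ)) - enc b := by abel
      rwa [heq2] at h
    have e2 := huniq _ ⟨hc2, by
      have h : Gc.mulVec (fun i => (b i : ℝ)) -
          (Gc.mulVec (fun i => (b i : ℝ)) - enc b) = enc b := by abel
      rw [h]; exact hFb⟩
    have h3 := e2.trans e1.symm
    exact sub_right_injective h3
end

section
/- Let Hc and Gs be lower-triangular invertible n×n real matrices with diagonal entries h_{ii} > 0 and g_{ii} > 0 respectively, such that Hc·Gs is an integer matrix. Set Gc = Hc⁻¹ and Mᵢ = h_{ii}·g_{ii}. Then each Mᵢ is a positive integer, the diagonal entries of Gc·diag(M₁,…,Mₙ) equal those of Gs, and the parallelotope P(Gc·diag(M₁,…,Mₙ)) is a fundamental region for the lattice Λs generated by Gs. Consequently b ↦ Gc b mod Λs is a bijection from ∏ᵢ{0,…,Mᵢ−1} onto a complete set of coset representatives of Λc/Λs, where Λc is generated by Gc. -/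
set_option linter.unusedVariables false
set_option linter.unreachableTactic false
set_option linter.unusedTactic false




noncomputable def solR {n : ℕ} (Gs P : Matrix (Fin n) (Fin n) ℝ) (y : Fin n → ℝ) :
    Fin n → ℤ × ℝ
  | i =>
    (⌊(y i - ∑ k : Fin n, if h : k < i then
        (Gs i k * ((solR Gs P y k).1 : ℝ) + P i k * (solR Gs P y k).2) else 0) / Gs i i⌋,
     Int.fract ((y i - ∑ k : Fin n, if h : k < i then
        (Gs i k * ((solR Gs P y k).1 : ℝ) + P i k * (solR Gs P y k).2) else 0) / Gs i i))
  termination_by i => i.val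
  decreasing_by all_goals exact h

def solZ {n : ℕ} (A : Matrix (Fin n) (Fin n) ℤ) (c : Fin n → ℤ) : Fin n → ℤ
  | i => (c i - ∑ k : Fin n, if h : k < i then A i k * solZ A c k else 0) / A i i
  termination_by i => i.val
  decreasing_by exact h

lemma sum_split {n : ℕ} {M : Type*} [AddCommMonoid M] (i : Fin n) (f : Fin n → M)
    (hf : ∀ k, i < k → f k = 0) :
    ∑ k, f k = (∑ k, if k < i then f k else 0) + f i := by
  have h : ∀ k : Fin n, f k = (if k < i then f k else 0) + (if k = i then f k else 0) := by
    intro k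
    rcases lt_trichotomy k i with h | h | h
    · simp [h, h.ne]
    · subst h; simp
    · simp [hf k h, not_lt.mpr h.le, h.ne']
  rw [Finset.sum_congr rfl fun k _ => h k, Finset.sum_add_distrib,
    Finset.sum_ite_eq' Finset.univ i f]
  simp

lemma solR_snd {n : ℕ} (Gs P : Matrix (Fin n) (Fin n) ℝ) (y : Fin n → ℝ) (k : Fin n) :
    0 ≤ (solR Gs P y k).2 ∧ (solR Gs P y k).2 < 1 := by
  rw [solR]
  exact ⟨Int.fract_nonneg _, Int.fract_lt_one _⟩

lemma solR_add {n : ℕ} (Gs P : Matrix (Fin n) (Fin n) ℝ) (y : Fin n → ℝ) (i : Fin n) :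
    ((solR Gs P y i).1 : ℝ) + (solR Gs P y i).2
      = (y i - ∑ k : Fin n, if h : k < i then
          (Gs i k * ((solR Gs P y k).1 : ℝ) + P i k * (solR Gs P y k).2) else 0) / Gs i i := by
  conv_lhs => rw [solR]
  exact Int.floor_add_fract _

lemma solR_spec {n : ℕ} (Gs P : Matrix (Fin n) (Fin n) ℝ)
    (hGtri : ∀ i j : Fin n, i < j → Gs i j = 0) (hPtri : ∀ i j : Fin n, i < j → P i j = 0)
    (hdiag : ∀ i, P i i = Gs i i) (hpos : ∀ i, 0 < Gs i i) (y : Fin n → ℝ) (i : Fin n) :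
    y i = ∑ k, (Gs i k * ((solR Gs P y k).1 : ℝ) + P i k * (solR Gs P y k).2) := by
  have hf : ∀ k, i < k →
      Gs i k * ((solR Gs P y k).1 : ℝ) + P i k * (solR Gs P y k).2 = 0 := by
    intro k hk; rw [hGtri i k hk, hPtri i k hk]; ring
  rw [sum_split i _ hf]
  have hS : (∑ k, if k < i then
      (Gs i k * ((solR Gs P y k).1 : ℝ) + P i k * (solR Gs P y k).2) else 0)
      = ∑ k : Fin n, if h : k < i then
      (Gs i k * ((solR Gs P y k).1 : ℝ) + P i k * (solR Gs P y k).2) else 0 := by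
    simp [dite_eq_ite]
  have hadd := solR_add Gs P y i
  have hne : Gs i i ≠ 0 := (hpos i).ne'
  have hterm : Gs i i * (((solR Gs P y i).1 : ℝ) + (solR Gs P y i).2)
      = y i - ∑ k : Fin n, if h : k < i then
      (Gs i k * ((solR Gs P y k).1 : ℝ) + P i k * (solR Gs P y k).2) else 0 := by
    rw [hadd]; field_simp
  rw [hS]
  have : Gs i i * ((solR Gs P y i).1 : ℝ) + P i i * (solR Gs P y i).2
      = Gs i i * (((solR Gs P y i).1 : ℝ) + (solR Gs P y i).2) := by rw [hdiag i]; ring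
  rw [this, hterm]; ring

lemma fin_strong_ind {n : ℕ} (C : Fin n → Prop) (h : ∀ i, (∀ j, j < i → C j) → C i) :
    ∀ i, C i := fun i => WellFoundedLT.induction i h

lemma uniqR {n : ℕ} (Gs P : Matrix (Fin n) (Fin n) ℝ)
    (hGtri : ∀ i j : Fin n, i < j → Gs i j = 0) (hPtri : ∀ i j : Fin n, i < j → P i j = 0)
    (hdiag : ∀ i, P i i = Gs i i) (hpos : ∀ i, 0 < Gs i i)
    (b₁ b₂ : Fin n → ℤ) (s₁ s₂ : Fin n → ℝ)
    (hs₁ : ∀ i, 0 ≤ s₁ i ∧ s₁ i < 1) (hs₂ : ∀ i, 0 ≤ s₂ i ∧ s₂ i < 1)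
    (heq : ∀ i, ∑ k, (Gs i k * (b₁ k : ℝ) + P i k * s₁ k)
              = ∑ k, (Gs i k * (b₂ k : ℝ) + P i k * s₂ k)) :
    ∀ i, b₁ i = b₂ i ∧ s₁ i = s₂ i := by
  apply fin_strong_ind
  intro i IH
  have key : ∑ k, (Gs i k * ((b₁ k : ℝ) - b₂ k) + P i k * (s₁ k - s₂ k)) = 0 := by
    have h2 : ∑ k, (Gs i k * ((b₁ k : ℝ) - b₂ k) + P i k * (s₁ k - s₂ k))
        = (∑ k, (Gs i k * (b₁ k : ℝ) + P i k * s₁ k))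
          - ∑ k, (Gs i k * (b₂ k : ℝ) + P i k * s₂ k) := by
      rw [← Finset.sum_sub_distrib]; exact Finset.sum_congr rfl fun k _ => by ring
    rw [h2, heq i, sub_self]
  have hzero : ∀ k, k ≠ i → Gs i k * ((b₁ k : ℝ) - b₂ k) + P i k * (s₁ k - s₂ k) = 0 := by
    intro k hk
    rcases lt_or_gt_of_ne hk with h | h
    · obtain ⟨hb, hs⟩ := IH k h; rw [hb, hs]; ring
    · rw [hGtri i k h, hPtri i k h]; ring
  rw [Finset.sum_eq_single i (fun k _ hk => hzero k hk) (by simp)] at key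
  rw [hdiag i] at key
  have hne : Gs i i ≠ 0 := (hpos i).ne'
  have h3 : Gs i i * (((b₁ i : ℝ) - b₂ i) + (s₁ i - s₂ i)) = 0 := by
    rw [mul_add]; linarith [key]
  have h4 := (mul_eq_zero.mp h3).resolve_left hne
  have hb : ((b₁ i : ℝ)) - b₂ i = s₂ i - s₁ i := by linarith
  have habs : |(b₁ i - b₂ i : ℤ)| < 1 := by
    have h5 : |((b₁ i - b₂ i : ℤ) : ℝ)| < 1 := by
      push_cast
      rw [abs_lt]
      constructor <;> [skip; skip] <;>
        (first | (have := hs₁ i; have := hs₂ i; rw [hb] at *) | skip) <;>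
        nlinarith [hs₁ i, hs₂ i, hb]
    rw [← Int.cast_abs] at h5
    exact_mod_cast h5
  have hbi : b₁ i = b₂ i := by
    have := abs_lt.mp habs; omega
  refine ⟨hbi, ?_⟩
  have hc : (b₁ i : ℝ) = b₂ i := by exact_mod_cast hbi
  linarith [hb]

lemma fund_tri {n : ℕ} (Gs P : Matrix (Fin n) (Fin n) ℝ)
    (hGtri : ∀ i j : Fin n, i < j → Gs i j = 0) (hPtri : ∀ i j : Fin n, i < j → P i j = 0)
    (hdiag : ∀ i, P i i = Gs i i) (hpos : ∀ i, 0 < Gs i i) :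
    IsFund (lat Gs) (Par P) := by
  intro y
  set b : Fin n → ℤ := fun k => (solR Gs P y k).1 with hbdef
  set s : Fin n → ℝ := fun k => (solR Gs P y k).2 with hsdef
  have hspec : ∀ i, y i = ∑ k, (Gs i k * (b k : ℝ) + P i k * s k) :=
    fun i => solR_spec Gs P hGtri hPtri hdiag hpos y i
  refine ⟨Gs.mulVec (fun i => (b i : ℝ)), ⟨⟨b, rfl⟩, ⟨s, fun i => solR_snd Gs P y i, ?_⟩⟩, ?_⟩
  · funext i
    simp only [Pi.sub_apply, Matrix.mulVec, dotProduct]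
    rw [hspec i, Finset.sum_add_distrib]; ring
  · rintro l' ⟨⟨b₂, rfl⟩, s₂, hs₂, hP⟩
    have heq : ∀ i, ∑ k, (Gs i k * (b₂ k : ℝ) + P i k * s₂ k)
        = ∑ k, (Gs i k * (b k : ℝ) + P i k * s k) := by
      intro i
      have h1 := congrFun hP i
      simp only [Pi.sub_apply, Matrix.mulVec, dotProduct] at h1
      rw [← hspec i, Finset.sum_add_distrib]
      linarith [h1]
    have huniq := uniqR Gs P hGtri hPtri hdiag hpos b₂ b s₂ s hs₂
      (fun i => solR_snd Gs P y i) heq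
    rw [show b₂ = b from funext fun i => (huniq i).1]

lemma solZ_box {n : ℕ} (A : Matrix (Fin n) (Fin n) ℤ)
    (htri : ∀ i j : Fin n, i < j → A i j = 0) (hpos : ∀ i, 0 < A i i)
    (c : Fin n → ℤ) (i : Fin n) :
    0 ≤ c i - ∑ k, A i k * solZ A c k ∧ c i - ∑ k, A i k * solZ A c k < A i i := by
  have hsplit : ∑ k, A i k * solZ A c k
      = (∑ k, if k < i then A i k * solZ A c k else 0) + A i i * solZ A c i :=
    sum_split i _ (fun k hk => by rw [htri i k hk]; ring)
  have hz : solZ A c i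
      = (c i - ∑ k : Fin n, if h : k < i then A i k * solZ A c k else 0) / A i i := by
    conv_lhs => rw [solZ]
  have hite : (∑ k, if k < i then A i k * solZ A c k else 0)
      = ∑ k : Fin n, if h : k < i then A i k * solZ A c k else 0 := by
    simp [dite_eq_ite]
  have hb : c i - ∑ k, A i k * solZ A c k
      = (c i - ∑ k : Fin n, if h : k < i then A i k * solZ A c k else 0) % A i i := by
    have hdm := Int.mul_ediv_add_emod
      (c i - ∑ k : Fin n, if h : k < i then A i k * solZ A c k else 0) (A i i)
    rw [hsplit, hite, hz]
    linarith [hdm]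
  rw [hb]
  exact ⟨Int.emod_nonneg _ (hpos i).ne', Int.emod_lt_of_pos _ (hpos i)⟩

lemma existsZ {n : ℕ} (A : Matrix (Fin n) (Fin n) ℤ)
    (htri : ∀ i j : Fin n, i < j → A i j = 0) (hpos : ∀ i, 0 < A i i) (c : Fin n → ℤ) :
    ∃ b z : Fin n → ℤ, (∀ i, 0 ≤ b i ∧ b i < A i i) ∧ ∀ i, c i = b i + ∑ k, A i k * z k :=
  ⟨fun i => c i - ∑ k, A i k * solZ A c k, solZ A c,
    fun i => solZ_box A htri hpos c i, fun i => by ring⟩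

lemma uniqZ {n : ℕ} (A : Matrix (Fin n) (Fin n) ℤ)
    (htri : ∀ i j : Fin n, i < j → A i j = 0) (hpos : ∀ i, 0 < A i i)
    (b b' z : Fin n → ℤ)
    (hb : ∀ i, 0 ≤ b i ∧ b i < A i i) (hb' : ∀ i, 0 ≤ b' i ∧ b' i < A i i)
    (hd : ∀ i, b i - b' i = ∑ k, A i k * z k) : ∀ i, z i = 0 ∧ b i = b' i := by
  apply fin_strong_ind
  intro i IH
  have hsum : ∑ k, A i k * z k = A i i * z i := by
    rw [sum_split i _ (fun k hk => by rw [htri i k hk]; ring)]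
    have h0 : (∑ k, if k < i then A i k * z k else 0) = 0 :=
      Finset.sum_eq_zero fun k _ => by
        by_cases h : k < i
        · simp [h, (IH k h).1]
        · simp [h]
    rw [h0, zero_add]
  have h1 := hd i
  rw [hsum] at h1
  have hz : z i = 0 := by
    rcases lt_trichotomy (z i) 0 with h | h | h
    · nlinarith [(hb i).1, (hb' i).2, hpos i]
    · exact h
    · nlinarith [(hb i).2, (hb' i).1, hpos i]
  exact ⟨hz, by rw [hz, mul_zero] at h1; omega⟩

/-- Triangular-matrix rectangular encoding: with `Hc`, `Gs` lower triangular,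
`Hc·Gs` integral, positive diagonals, `Mᵢ = h_{ii} g_{ii}`: each `Mᵢ` is a
positive integer, `Gc · diag(M)` has the same diagonal as `Gs`, its
parallelotope is a fundamental region of `Λs`, and `b ↦ Gc b mod Λs` is a
bijection from the box onto `Λc ∩ F`. -/
theorem triangular_rectangular_encoding {n : ℕ}
    (Hc Gs : Matrix (Fin n) (Fin n) ℝ)
    (hHctri : ∀ i j, i < j → Hc i j = 0)
    (hGstri : ∀ i j, i < j → Gs i j = 0)
    (hHc : IsUnit Hc.det) (hGs : IsUnit Gs.det)
    (hHpos : ∀ i, 0 < Hc i i) (hGpos : ∀ i, 0 < Gs i i)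
    (hint : ∀ i j, ∃ z : ℤ, (Hc * Gs) i j = (z : ℝ))
    (M : Fin n → ℤ) (hM : ∀ i, (M i : ℝ) = Hc i i * Gs i i) :
    (∀ i, 0 < M i) ∧
    (∀ i, (Hc⁻¹ * Matrix.diagonal (fun i => (M i : ℝ))) i i = Gs i i) ∧
    IsFund (lat Gs) (Par (Hc⁻¹ * Matrix.diagonal (fun i => (M i : ℝ)))) ∧
    (∀ (F : Set (Fin n → ℝ)), IsFund (lat Gs) F →
      ∀ enc : (Fin n → ℤ) → (Fin n → ℝ),
        (∀ b : Fin n → ℤ, enc b ∈ F ∧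
          enc b - (Hc⁻¹).mulVec (fun i => (b i : ℝ)) ∈ lat Gs) →
        Set.BijOn enc {b : Fin n → ℤ | ∀ i, 0 ≤ b i ∧ b i < M i}
          (lat Hc⁻¹ ∩ F)) := by
  -- positivity of M
  have hMpos : ∀ i, 0 < M i := by
    intro i
    have : (0 : ℝ) < (M i : ℝ) := by rw [hM i]; exact mul_pos (hHpos i) (hGpos i)
    exact_mod_cast this
  -- triangularity of Hc⁻¹
  haveI : Invertible Hc := Hc.invertibleOfIsUnitDet hHc
  have hbt : Hc.BlockTriangular (fun i => OrderDual.toDual i) :=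
    fun i j h => hHctri i j (OrderDual.toDual_lt_toDual.mp h)
  have hinvbt := Matrix.blockTriangular_inv_of_blockTriangular hbt
  have hGctri : ∀ i j : Fin n, i < j → Hc⁻¹ i j = 0 :=
    fun i j h => hinvbt (OrderDual.toDual_lt_toDual.mpr h)
  -- diagonal of Hc⁻¹
  have hinv_mul : Hc⁻¹ * Hc = 1 := Matrix.nonsing_inv_mul Hc hHc
  have hGcdiag : ∀ i, Hc⁻¹ i i * Hc i i = 1 := by
    intro i
    have h1 : (Hc⁻¹ * Hc) i i = (1 : Matrix (Fin n) (Fin n) ℝ) i i := by rw [hinv_mul]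
    rw [Matrix.mul_apply, Matrix.one_apply_eq] at h1
    rw [Finset.sum_eq_single i ?_ (by simp)] at h1
    · exact h1
    · intro k _ hk
      rcases lt_or_gt_of_ne hk with h | h
      · rw [hHctri k i h, mul_zero]
      · rw [hGctri i k h, zero_mul]
  -- the integer matrix A with (A : ℝ) = Hc * Gs
  obtain ⟨A, hA⟩ : ∃ A : Matrix (Fin n) (Fin n) ℤ, ∀ i j, ((A i j : ℝ)) = (Hc * Gs) i j := by
    choose A hA using hint
    exact ⟨Matrix.of A, fun i j => (hA i j).symm⟩
  have hAtri : ∀ i j : Fin n, i < j → A i j = 0 := by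
    intro i j h
    have h0 : ((A i j : ℝ)) = 0 := by
      rw [hA i j, Matrix.mul_apply]
      apply Finset.sum_eq_zero
      intro k _
      rcases le_or_gt k i with hk | hk
      · rw [hGstri k j (lt_of_le_of_lt hk h), mul_zero]
      · rw [hHctri i k hk, zero_mul]
    exact_mod_cast h0
  have hAdiag : ∀ i, A i i = M i := by
    intro i
    have h0 : ((A i i : ℝ)) = (M i : ℝ) := by
      rw [hA i i, Matrix.mul_apply, hM i]
      rw [Finset.sum_eq_single i ?_ (by simp)]
      intro k _ hk
      rcases lt_or_gt_of_ne hk with h | h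
      · rw [hGstri k i h, mul_zero]
      · rw [hHctri i k h, zero_mul]
    exact_mod_cast h0
  have hApos : ∀ i, 0 < A i i := fun i => (hAdiag i) ▸ hMpos i
  -- the matrix P = Hc⁻¹ * diag M
  set P := Hc⁻¹ * Matrix.diagonal (fun i => (M i : ℝ)) with hPdef
  have hPapp : ∀ i j, P i j = Hc⁻¹ i j * (M j : ℝ) := fun i j => Matrix.mul_diagonal _ _ _ _
  have hPtri : ∀ i j : Fin n, i < j → P i j = 0 := by
    intro i j h; rw [hPapp, hGctri i j h, zero_mul]
  have hPdiag : ∀ i, P i i = Gs i i := by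
    intro i
    rw [hPapp, hM i, ← mul_assoc, hGcdiag i, one_mul]
  refine ⟨hMpos, hPdiag, fund_tri Gs P hGstri hPtri hPdiag hGpos, ?_⟩
  -- Part 4
  intro F hF enc henc
  have hmulA : ∀ z : Fin n → ℤ,
      (fun i => ((A.mulVec z) i : ℝ)) = (Hc * Gs).mulVec (fun i => (z i : ℝ)) := by
    intro z; funext i
    simp only [Matrix.mulVec, dotProduct]
    push_cast
    exact Finset.sum_congr rfl fun k _ => by rw [hA i k]
  have hGsz : ∀ z : Fin n → ℤ, Gs.mulVec (fun i => (z i : ℝ))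
      = Hc⁻¹.mulVec (fun i => ((A.mulVec z) i : ℝ)) := by
    intro z
    rw [hmulA z, Matrix.mulVec_mulVec, ← Matrix.mul_assoc, hinv_mul, Matrix.one_mul]
  have hinj : ∀ v w : Fin n → ℝ, Hc⁻¹.mulVec v = Hc⁻¹.mulVec w → v = w := by
    intro v w h
    have h2 := congrArg Hc.mulVec h
    rwa [Matrix.mulVec_mulVec, Matrix.mulVec_mulVec, Matrix.mul_nonsing_inv Hc hHc,
      Matrix.one_mulVec, Matrix.one_mulVec] at h2
  have hlat_sub : ∀ x y' : Fin n → ℝ, x ∈ lat Gs → y' ∈ lat Gs → x - y' ∈ lat Gs := by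
    rintro x y' ⟨a, rfl⟩ ⟨b, rfl⟩
    refine ⟨a - b, ?_⟩
    have hv : ((fun i => ((a i : ℝ))) - fun i => ((b i : ℝ)))
        = fun i => (((a - b) i : ℤ) : ℝ) := by
      funext i; simp only [Pi.sub_apply]; push_cast; ring
    rw [← Matrix.mulVec_sub, hv]
  refine ⟨?_, ?_, ?_⟩
  · -- MapsTo
    intro b _
    refine ⟨?_, (henc b).1⟩
    obtain ⟨w, hw⟩ := (henc b).2
    refine ⟨A.mulVec w + b, ?_⟩
    have h1 : enc b = Gs.mulVec (fun i => (w i : ℝ)) + Hc⁻¹.mulVec (fun i => (b i : ℝ)) := by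
      rw [← hw]; exact (sub_add_cancel _ _).symm
    rw [hGsz w, ← Matrix.mulVec_add] at h1
    have hv : ((fun i => ((A.mulVec w i : ℤ) : ℝ)) + fun i => ((b i : ℝ)))
        = fun i => (((A.mulVec w + b) i : ℤ) : ℝ) := by
      funext i; simp only [Pi.add_apply]; push_cast; ring
    rw [h1, hv]
  · -- InjOn
    intro b hb b' hb' heq
    obtain ⟨w, hw⟩ := (henc b).2
    obtain ⟨w', hw'⟩ := (henc b').2
    have hdiff : Hc⁻¹.mulVec (fun i => (b' i : ℝ)) - Hc⁻¹.mulVec (fun i => (b i : ℝ)) ∈ lat Gs := by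
      have h := hlat_sub _ _ ⟨w, hw⟩ ⟨w', hw'⟩
      have heq2 : (enc b - Hc⁻¹.mulVec (fun i => (b i : ℝ)))
          - (enc b' - Hc⁻¹.mulVec (fun i => (b' i : ℝ)))
          = Hc⁻¹.mulVec (fun i => (b' i : ℝ)) - Hc⁻¹.mulVec (fun i => (b i : ℝ)) := by
        rw [heq]; abel
      rwa [heq2] at h
    obtain ⟨z, hz⟩ := hdiff
    have h4 : Hc⁻¹.mulVec ((fun i => (b' i : ℝ)) - fun i => (b i : ℝ))
        = Hc⁻¹.mulVec (fun i => ((A.mulVec z) i : ℝ)) := by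
      rw [Matrix.mulVec_sub, hz, hGsz z]
    have h5 := hinj _ _ h4
    have h6 : ∀ i, b' i - b i = ∑ k, A i k * z k := by
      intro i
      have h7 := congrFun h5 i
      simp only [Pi.sub_apply] at h7
      have h8 : ((b' i - b i : ℤ) : ℝ) = ((A.mulVec z) i : ℝ) := by push_cast; linarith
      have h9 : b' i - b i = (A.mulVec z) i := by exact_mod_cast h8
      simpa [Matrix.mulVec, dotProduct] using h9
    have hbA : ∀ i, 0 ≤ b i ∧ b i < A i i := fun i => (hAdiag i).symm ▸ hb i
    have hbA' : ∀ i, 0 ≤ b' i ∧ b' i < A i i := fun i => (hAdiag i).symm ▸ hb' i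
    have huniq := uniqZ A hAtri hApos b' b z hbA' hbA h6
    exact (funext fun i => (huniq i).2).symm
  · -- SurjOn
    rintro x ⟨⟨c, rfl⟩, hxF⟩
    obtain ⟨b, z, hbox, hcz⟩ := existsZ A hAtri hApos c
    refine ⟨b, fun i => ⟨(hbox i).1, (hAdiag i) ▸ (hbox i).2⟩, ?_⟩
    have hc : (fun i => (c i : ℝ)) = (fun i => (b i : ℝ)) + fun i => ((A.mulVec z) i : ℝ) := by
      funext i
      simp only [Pi.add_apply]
      have h0 : (A.mulVec z) i = ∑ k, A i k * z k := rfl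
      rw [h0]
      push_cast [hcz i]
      ring
    have hx : Hc⁻¹.mulVec (fun i => (c i : ℝ))
        = Hc⁻¹.mulVec (fun i => (b i : ℝ)) + Gs.mulVec (fun i => (z i : ℝ)) := by
      rw [hc, Matrix.mulVec_add, hGsz z]
    obtain ⟨w, hw⟩ := (henc b).2
    have hdiff2 : enc b - Hc⁻¹.mulVec (fun i => (c i : ℝ)) ∈ lat Gs := by
      rw [hx]
      have h0 : enc b - (Hc⁻¹.mulVec (fun i => (b i : ℝ)) + Gs.mulVec (fun i => (z i : ℝ)))
          = (enc b - Hc⁻¹.mulVec (fun i => (b i : ℝ))) - Gs.mulVec (fun i => (z i : ℝ)) := by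
        abel
      rw [h0]
      exact hlat_sub _ _ ⟨w, hw⟩ ⟨z, rfl⟩
    obtain ⟨l, hl, hu⟩ := hF (enc b)
    have hzero_lat : (0 : Fin n → ℝ) ∈ lat Gs := by
      refine ⟨0, ?_⟩
      have hv : (fun i => (((0 : Fin n → ℤ) i : ℤ) : ℝ)) = (0 : Fin n → ℝ) :=
        funext fun i => by simp
      rw [hv, Matrix.mulVec_zero]
    have e1 : (0 : Fin n → ℝ) = l := hu 0 ⟨hzero_lat, by simpa using (henc b).1⟩
    have e2 : enc b - Hc⁻¹.mulVec (fun i => (c i : ℝ)) = l :=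
      hu _ ⟨hdiff2, by simpa using hxF⟩
    have e3 : enc b - Hc⁻¹.mulVec (fun i => (c i : ℝ)) = 0 := e2.trans e1.symm
    exact sub_eq_zero.mp e3
end

section
/- Let Gc be a lower-triangular invertible real matrix with positive diagonal entries v_{ii}, and K > 0 such that Mᵢ := K/v_{ii} is a positive integer for each i. Let Λs be the lattice generated by Gs := Gc·diag(M₁,…,Mₙ). Then Λs ⊆ Λc, the hypercube H = [−K/2, K/2)ⁿ is a fundamental region of Λs, and |Λc ∩ H| = Kⁿ/det(Gc) = ∏ᵢ Mᵢ. -/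
/-- The unique integer `c` with `t - K*c ∈ [-K/2, K/2)` is `⌊t/K + 1/2⌋`. -/
lemma round_mem (K t : ℝ) (hK : 0 < K) :
    -(K / 2) ≤ t - K * ⌊t / K + 1 / 2⌋ ∧ t - K * ⌊t / K + 1 / 2⌋ < K / 2 := by
  have h1 : (⌊t / K + 1 / 2⌋ : ℝ) ≤ t / K + 1 / 2 := Int.floor_le _
  have h2 : t / K + 1 / 2 < ⌊t / K + 1 / 2⌋ + 1 := Int.lt_floor_add_one _
  have ht : K * (t / K) = t := by field_simp
  constructor
  · nlinarith [mul_le_mul_of_nonneg_left h1 hK.le]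
  · nlinarith [mul_lt_mul_of_pos_left h2 hK]

lemma round_unique {K S u : ℝ} (hK : 0 < K) {c c' : ℤ}
    (h1 : -(K / 2) ≤ u - (S + K * (c : ℝ))) (h2 : u - (S + K * (c : ℝ)) < K / 2)
    (h1' : -(K / 2) ≤ u - (S + K * (c' : ℝ))) (h2' : u - (S + K * (c' : ℝ)) < K / 2) :
    c = c' := by
  have a1 : (c : ℝ) < (c' : ℝ) + 1 := by nlinarith
  have a2 : (c' : ℝ) < (c : ℝ) + 1 := by nlinarith
  have b1 : c < c' + 1 := by exact_mod_cast a1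
  have b2 : c' < c + 1 := by exact_mod_cast a2
  omega

/-- Auxiliary recursive solver: forward substitution rounding at each step. -/
noncomputable def sAux {n : ℕ} (A : Matrix (Fin n) (Fin n) ℝ) (K : ℝ) (y : Fin n → ℝ) :
    ℕ → Fin n → ℤ
  | 0 => fun _ => 0
  | (m + 1) => fun j =>
      if (j : ℕ) = m then
        ⌊(y j - ∑ k ∈ Finset.filter (fun k => k < j) Finset.univ,
            A j k * (sAux A K y m k : ℝ)) / K + 1 / 2⌋
      else sAux A K y m j

lemma sAux_stable {n : ℕ} (A : Matrix (Fin n) (Fin n) ℝ) (K : ℝ) (y : Fin n → ℝ) :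
    ∀ m' m, m ≤ m' → ∀ j : Fin n, (j : ℕ) < m → sAux A K y m' j = sAux A K y m j := by
  intro m'
  induction m' with
  | zero =>
    intro m hm j hj
    have : m = 0 := Nat.le_zero.mp hm
    subst this; rfl
  | succ m' ih =>
    intro m hm j hj
    rcases Nat.eq_or_lt_of_le hm with h | h
    · subst h; rfl
    · have hm' : m ≤ m' := Nat.lt_succ_iff.mp h
      have hj' : (j : ℕ) ≠ m' := by omega
      show sAux A K y (m' + 1) j = _
      simp only [sAux]
      rw [if_neg hj']
      exact ih m hm' j hj

lemma sAux_spec {n : ℕ} (A : Matrix (Fin n) (Fin n) ℝ) (K : ℝ) (y : Fin n → ℝ) (j : Fin n) :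
    sAux A K y n j =
      ⌊(y j - ∑ k ∈ Finset.filter (fun k => k < j) Finset.univ,
          A j k * (sAux A K y n k : ℝ)) / K + 1 / 2⌋ := by
  have h1 : sAux A K y n j = sAux A K y ((j : ℕ) + 1) j :=
    sAux_stable A K y n ((j : ℕ) + 1) j.isLt j (Nat.lt_succ_self _)
  rw [h1]
  simp only [sAux]
  rw [if_pos trivial]
  have hs : ∀ k ∈ Finset.filter (fun k => k < j) Finset.univ,
      A j k * (sAux A K y (j : ℕ) k : ℝ) = A j k * (sAux A K y n k : ℝ) := by
    intro k hk
    have hkj : k < j := (Finset.mem_filter.mp hk).2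
    have hkj' : (k : ℕ) < (j : ℕ) := hkj
    rw [← sAux_stable A K y n (j : ℕ) (Nat.le_of_lt j.isLt) k hkj']
  rw [Finset.sum_congr rfl hs]

/-- Fundamental-region property for lower-triangular matrices with diagonal `K`. -/
lemma fund_triangular {n : ℕ} (A : Matrix (Fin n) (Fin n) ℝ) (K : ℝ) (hK : 0 < K)
    (htri : ∀ i j, i < j → A i j = 0) (hdiag : ∀ i, A i i = K) (y : Fin n → ℝ) :
    ∃! c : Fin n → ℤ, ∀ i, -(K / 2) ≤ y i - A.mulVec (fun j => (c j : ℝ)) i ∧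
      y i - A.mulVec (fun j => (c j : ℝ)) i < K / 2 := by
  have hsplit : ∀ (c : Fin n → ℤ) (i : Fin n),
      A.mulVec (fun j => (c j : ℝ)) i
        = (∑ k ∈ Finset.filter (fun k => k < i) Finset.univ, A i k * (c k : ℝ))
          + K * (c i : ℝ) := by
    intro c i
    have hvan : ∀ k ∈ Finset.univ,
        k ∉ insert i (Finset.filter (fun k => k < i) Finset.univ) → A i k * (c k : ℝ) = 0 := by
      intro k _ hk
      simp only [Finset.mem_insert, Finset.mem_filter, Finset.mem_univ, true_and, not_or] at hk
      have : i < k := lt_of_le_of_ne (not_lt.mp hk.2) (Ne.symm hk.1)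
      rw [htri i k this, zero_mul]
    have hsum := Finset.sum_subset
      (Finset.subset_univ (insert i (Finset.filter (fun k => k < i) Finset.univ))) hvan
    have hmv : A.mulVec (fun j => (c j : ℝ)) i = ∑ k, A i k * (c k : ℝ) := by
      simp [Matrix.mulVec, dotProduct]
    rw [hmv, ← hsum, Finset.sum_insert (by simp), hdiag i]
    ring
  refine ⟨sAux A K y n, fun i => ?_, ?_⟩
  · rw [hsplit]
    have hc := sAux_spec A K y i
    rw [hc]
    have hr := round_mem K
      (y i - ∑ k ∈ Finset.filter (fun k => k < i) Finset.univ,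
        A i k * (sAux A K y n k : ℝ)) hK
    constructor
    · linarith [hr.1]
    · linarith [hr.2]
  · intro c' hc'
    have key : ∀ m, ∀ j : Fin n, (j : ℕ) < m → c' j = sAux A K y n j := by
      intro m
      induction m with
      | zero => intro j hj; exact absurd hj (Nat.not_lt_zero _)
      | succ m ih =>
        intro j hj
        rcases Nat.lt_or_ge (j : ℕ) m with h | h
        · exact ih j h
        · have h1 := hc' j
          have h2s := sAux_spec A K y j
          have h2r := round_mem K
            (y j - ∑ k ∈ Finset.filter (fun k => k < j) Finset.univ,
              A j k * (sAux A K y n k : ℝ)) hK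
          rw [hsplit] at h1
          have hsum : ∑ k ∈ Finset.filter (fun k => k < j) Finset.univ, A j k * (c' k : ℝ)
              = ∑ k ∈ Finset.filter (fun k => k < j) Finset.univ,
                  A j k * (sAux A K y n k : ℝ) := by
            refine Finset.sum_congr rfl fun k hk => ?_
            have hkj : k < j := (Finset.mem_filter.mp hk).2
            have hkj' : (k : ℕ) < (j : ℕ) := hkj
            rw [ih k (by omega)]
          rw [hsum] at h1
          rw [← h2s] at h2r
          exact round_unique hK h1.1 h1.2 (by linarith [h2r.1]) (by linarith [h2r.2])
    exact funext fun j => key n j j.isLt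

/-- Hypercube shaping: with `Gc` lower triangular, positive diagonal `v_{ii}`,
`Mᵢ = K / v_{ii} ∈ ℤ⁺` and `Gs = Gc·diag(M)`, we have `Λs ⊆ Λc`, the hypercube
`H = [−K/2, K/2)ⁿ` is a fundamental region of `Λs`, and
`|Λc ∩ H| = ∏ᵢ Mᵢ = Kⁿ / det Gc`. -/
theorem hypercube_shaping {n : ℕ}
    (Gc : Matrix (Fin n) (Fin n) ℝ)
    (htri : ∀ i j, i < j → Gc i j = 0)
    (hdiagpos : ∀ i, 0 < Gc i i)
    (K : ℝ) (hK : 0 < K)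
    (M : Fin n → ℤ) (hM : ∀ i, 0 < M i ∧ (M i : ℝ) * Gc i i = K) :
    lat (Gc * Matrix.diagonal (fun i => (M i : ℝ))) ⊆ lat Gc ∧
    IsFund (lat (Gc * Matrix.diagonal (fun i => (M i : ℝ))))
      {x : Fin n → ℝ | ∀ i, -(K / 2) ≤ x i ∧ x i < K / 2} ∧
    (lat Gc ∩ {x : Fin n → ℝ | ∀ i, -(K / 2) ≤ x i ∧ x i < K / 2}).ncard
      = ∏ i, (M i).toNat ∧
    ((∏ i, (M i).toNat : ℕ) : ℝ) = K ^ n / Gc.det := by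
  set Gs := Gc * Matrix.diagonal (fun i => (M i : ℝ)) with hGsdef
  -- basic facts
  have hGs_apply : ∀ i j, Gs i j = Gc i j * (M j : ℝ) := fun i j =>
    Matrix.mul_diagonal _ _ _ _
  have hGstri : ∀ i j, i < j → Gs i j = 0 := by
    intro i j hij; rw [hGs_apply, htri i j hij, zero_mul]
  have hGsdiag : ∀ i, Gs i i = K := by
    intro i; rw [hGs_apply, mul_comm]; exact (hM i).2
  have hdet : Gc.det = ∏ i, Gc i i :=
    Matrix.det_of_lowerTriangular Gc (fun i j h => htri i j h)
  have hdetpos : 0 < Gc.det := by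
    rw [hdet]; exact Finset.prod_pos fun i _ => hdiagpos i
  have hunit : IsUnit Gc := (Matrix.isUnit_iff_isUnit_det Gc).mpr
    (isUnit_iff_ne_zero.mpr hdetpos.ne')
  have hinj : Function.Injective Gc.mulVec := Matrix.mulVec_injective_iff_isUnit.mpr hunit
  -- Part 1 : Λs ⊆ Λc
  have part1 : lat Gs ⊆ lat Gc := by
    rintro x ⟨b, rfl⟩
    refine ⟨fun i => M i * b i, ?_⟩
    rw [hGsdef, ← Matrix.mulVec_mulVec]
    have hD : (Matrix.diagonal fun i => (M i : ℝ)).mulVec (fun i => (b i : ℝ))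
        = fun i => ((M i * b i : ℤ) : ℝ) := by
      funext i
      rw [Matrix.mulVec_diagonal]
      push_cast
      ring
    rw [hD]
  -- Part 2 : fundamental region
  have part2 : IsFund (lat Gs) {x : Fin n → ℝ | ∀ i, -(K / 2) ≤ x i ∧ x i < K / 2} := by
    intro y
    obtain ⟨c, hc, hu⟩ := fund_triangular Gs K hK hGstri hGsdiag y
    refine ⟨Gs.mulVec (fun j => (c j : ℝ)), ⟨⟨c, rfl⟩, fun i => hc i⟩, ?_⟩
    rintro l ⟨⟨b, rfl⟩, hb⟩
    rw [hu b fun i => hb i]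
  -- the subtraction computation
  have hsubvec : ∀ (b q : Fin n → ℤ),
      Gc.mulVec (fun i => (b i : ℝ)) - Gs.mulVec (fun i => (q i : ℝ))
        = Gc.mulVec (fun i => ((b i - M i * q i : ℤ) : ℝ)) := by
    intro b q
    rw [hGsdef, ← Matrix.mulVec_mulVec, ← Matrix.mulVec_sub]
    have hD : ((fun i => (b i : ℝ)) - (Matrix.diagonal fun i => (M i : ℝ)).mulVec
        (fun i => (q i : ℝ))) = fun i => ((b i - M i * q i : ℤ) : ℝ) := by
      funext i
      simp only [Pi.sub_apply, Matrix.mulVec_diagonal]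
      push_cast
      ring
    rw [hD]
  -- Part 3 : counting
  have part3 : (lat Gc ∩ {x : Fin n → ℝ | ∀ i, -(K / 2) ≤ x i ∧ x i < K / 2}).ncard
      = ∏ i, (M i).toNat := by
    set B : Set (Fin n → ℤ) := {b | ∀ i, -(K / 2) ≤ Gc.mulVec (fun j => (b j : ℝ)) i ∧
      Gc.mulVec (fun j => (b j : ℝ)) i < K / 2} with hBdef
    have himg : lat Gc ∩ {x : Fin n → ℝ | ∀ i, -(K / 2) ≤ x i ∧ x i < K / 2}
        = (fun b : Fin n → ℤ => Gc.mulVec (fun i => (b i : ℝ))) '' B := by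
      ext x
      constructor
      · rintro ⟨⟨b, rfl⟩, hx⟩; exact ⟨b, fun i => hx i, rfl⟩
      · rintro ⟨b, hb, rfl⟩; exact ⟨⟨b, rfl⟩, fun i => hb i⟩
    have hinj2 : Function.Injective (fun b : Fin n → ℤ => Gc.mulVec (fun i => (b i : ℝ))) := by
      intro b b' h
      have h2 := hinj h
      funext i
      exact_mod_cast congrFun h2 i
    rw [himg, Set.ncard_image_of_injective _ hinj2, ← Nat.card_coe_set_eq]
    -- bijection with ∏ Fin (M i).toNat
    have φbound : ∀ (b : Fin n → ℤ) (i : Fin n), (b i % M i).toNat < (M i).toNat := by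
      intro b i
      have h1 : 0 ≤ b i % M i := Int.emod_nonneg _ (hM i).1.ne'
      have h2 : b i % M i < M i := Int.emod_lt_of_pos _ (hM i).1
      have h3 := (hM i).1
      omega
    set φ : B → (∀ i, Fin (M i).toNat) :=
      fun b i => ⟨(b.1 i % M i).toNat, φbound b.1 i⟩ with hφdef
    have hφbij : Function.Bijective φ := by
      constructor
      · -- injective
        rintro ⟨b, hb⟩ ⟨b', hb'⟩ h
        have hres : ∀ i, b i % M i = b' i % M i := by
          intro i
          have h0 := congrFun h i
          have hv : (b i % M i).toNat = (b' i % M i).toNat := congrArg Fin.val h0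
          have h1 : 0 ≤ b i % M i := Int.emod_nonneg _ (hM i).1.ne'
          have h2 : 0 ≤ b' i % M i := Int.emod_nonneg _ (hM i).1.ne'
          omega
        have hdvd : ∀ i, M i ∣ (b i - b' i) := by
          intro i
          refine Int.dvd_of_emod_eq_zero ?_
          rw [Int.sub_emod, hres i, sub_self, Int.zero_emod]
        choose q hq using hdvd
        -- apply uniqueness of fundamental region at y = Gc b
        obtain ⟨l, hl, hlu⟩ := part2 (Gc.mulVec (fun j => (b j : ℝ)))
        have c0 : (0 : Fin n → ℝ) ∈ lat Gs ∧
            Gc.mulVec (fun j => (b j : ℝ)) - 0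
              ∈ {x : Fin n → ℝ | ∀ i, -(K / 2) ≤ x i ∧ x i < K / 2} := by
          constructor
          · refine ⟨0, ?_⟩
            have h0 : (fun i : Fin n => (((0 : Fin n → ℤ) i : ℤ) : ℝ)) = 0 :=
              funext fun _ => by simp
            rw [h0, Matrix.mulVec_zero]
          · rw [sub_zero]; exact fun i => hb i
        have heq : ∀ i : Fin n, b i - M i * q i = b' i := by
          intro i
          have := hq i
          omega
        have c1 : Gs.mulVec (fun j => (q j : ℝ)) ∈ lat Gs ∧
            Gc.mulVec (fun j => (b j : ℝ)) - Gs.mulVec (fun j => (q j : ℝ))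
              ∈ {x : Fin n → ℝ | ∀ i, -(K / 2) ≤ x i ∧ x i < K / 2} := by
          constructor
          · exact ⟨q, rfl⟩
          · rw [hsubvec b q]
            have : (fun i => ((b i - M i * q i : ℤ) : ℝ)) = fun i => ((b' i : ℤ) : ℝ) := by
              funext i; rw [heq i]
            rw [this]
            exact fun i => hb' i
        have h0l : (0 : Fin n → ℝ) = l := hlu 0 c0
        have h1l : Gs.mulVec (fun j => (q j : ℝ)) = l := hlu _ c1
        have hGq : Gs.mulVec (fun j => (q j : ℝ)) = 0 := by rw [h1l, ← h0l]
        have hbb' : Gc.mulVec (fun j => (b' j : ℝ)) = Gc.mulVec (fun j => (b j : ℝ)) := by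
          have h3 := hsubvec b q
          rw [hGq, sub_zero] at h3
          have h4 : (fun i => ((b i - M i * q i : ℤ) : ℝ)) = fun j => ((b' j : ℤ) : ℝ) := by
            funext i; rw [heq i]
          rw [h3, h4]
        have hbb : (fun j => ((b' j : ℤ) : ℝ)) = fun j => ((b j : ℤ) : ℝ) := hinj hbb'
        refine Subtype.ext (funext fun i => ?_)
        exact_mod_cast (congrFun hbb i).symm
      · -- surjective
        intro r
        obtain ⟨l, ⟨⟨q, rfl⟩, hH⟩, _⟩ := part2 (Gc.mulVec (fun i => (((r i : ℕ) : ℤ) : ℝ)))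
        have hmem : (fun i => ((r i : ℕ) : ℤ) - M i * q i) ∈ B := by
          intro i
          have h2 := hsubvec (fun i => ((r i : ℕ) : ℤ)) q
          rw [h2] at hH
          exact hH i
        refine ⟨⟨fun i => ((r i : ℕ) : ℤ) - M i * q i, hmem⟩, ?_⟩
        funext i
        refine Fin.ext ?_
        show ((((r i : ℕ) : ℤ) - M i * q i) % M i).toNat = (r i : ℕ)
        have hrew : ((r i : ℕ) : ℤ) - M i * q i = ((r i : ℕ) : ℤ) + M i * (-q i) := by ring
        rw [hrew, Int.add_mul_emod_self_left]
        have hlt : ((r i : ℕ) : ℤ) < M i := by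
          have h1 := (r i).isLt
          have h2 := Int.toNat_of_nonneg (hM i).1.le
          omega
        rw [Int.emod_eq_of_lt (by positivity) hlt]
        exact Int.toNat_natCast _
    rw [Nat.card_congr (Equiv.ofBijective φ hφbij), Nat.card_pi]
    exact Finset.prod_congr rfl fun i _ => by simp [Nat.card_eq_fintype_card]
  -- Part 4 : product formula
  have part4 : ((∏ i, (M i).toNat : ℕ) : ℝ) = K ^ n / Gc.det := by
    rw [eq_div_iff hdetpos.ne', hdet]
    push_cast
    have hc : ∀ i : Fin n, (((M i).toNat : ℕ) : ℝ) = ((M i : ℤ) : ℝ) := by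
      intro i
      have := Int.toNat_of_nonneg (hM i).1.le
      exact_mod_cast congrArg (fun z : ℤ => (z : ℝ)) this
    rw [Finset.prod_congr rfl fun i _ => hc i, ← Finset.prod_mul_distrib]
    rw [Finset.prod_congr rfl fun i (_ : i ∈ Finset.univ) => (hM i).2]
    simp
  exact ⟨part1, part2, part3, part4⟩
end

section
/- In the setting of hypercube shaping (Gc lower-triangular with diagonal v_{ii}, Mᵢ = K/v_{ii} ∈ ℤ⁺, Gs = Gc·diag(M₁,…,Mₙ)), the matrix Hc·Gs = diag(M₁,…,Mₙ), so every entry of row i of Hc·Gs is divisible by Mᵢ; hence the encoding enc(b) = Gc b mod Λs (with respect to the hypercube fundamental region H = [−K/2,K/2)ⁿ) satisfies enc(b₁ ⊞ b₂) = enc(b₁) ⊕ enc(b₂), a group homomorphism from ∏ᵢ ℤ/Mᵢℤ to Λc ∩ H with operation x ⊕ y = (x+y) mod Λs. -/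
/-- Hypercube shaping homomorphism: with `Gc` lower triangular, positive
diagonal, `Mᵢ = K/v_{ii} ∈ ℤ⁺` and `Gs = Gc·diag(M)`, one has
`Hc·Gs = diag(M)` (so row `i` is divisible by `Mᵢ`), and the encoding w.r.t.
the hypercube `H = [−K/2,K/2)ⁿ` satisfies
`enc(b₁ ⊞ b₂) ≡ enc(b₁) + enc(b₂) (mod Λs)`. -/
theorem hypercube_shaping_homomorphism {n : ℕ}
    (Gc : Matrix (Fin n) (Fin n) ℝ)
    (htri : ∀ i j, i < j → Gc i j = 0)
    (hdiagpos : ∀ i, 0 < Gc i i)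
    (K : ℝ) (hK : 0 < K)
    (M : Fin n → ℤ) (hM : ∀ i, 0 < M i ∧ (M i : ℝ) * Gc i i = K)
    (enc : (Fin n → ℤ) → (Fin n → ℝ))
    (henc : ∀ b : Fin n → ℤ,
      enc b ∈ {x : Fin n → ℝ | ∀ i, -(K / 2) ≤ x i ∧ x i < K / 2} ∧
      enc b - Gc.mulVec (fun i => (b i : ℝ))
        ∈ lat (Gc * Matrix.diagonal (fun i => (M i : ℝ)))) :
    (Gc⁻¹ * (Gc * Matrix.diagonal (fun i => (M i : ℝ)))
      = Matrix.diagonal (fun i => (M i : ℝ))) ∧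
    (∀ b₁ b₂ : Fin n → ℤ,
      enc (fun i => (b₁ i + b₂ i) % M i) - (enc b₁ + enc b₂)
        ∈ lat (Gc * Matrix.diagonal (fun i => (M i : ℝ)))) := by
  have hdet : IsUnit Gc.det := by
    have h1 : Gc.BlockTriangular OrderDual.toDual := fun i j h => htri i j h
    rw [Matrix.det_of_lowerTriangular Gc h1]
    exact (Finset.prod_pos fun i _ => hdiagpos i).ne'.isUnit
  constructor
  · rw [← Matrix.mul_assoc, Matrix.nonsing_inv_mul Gc hdet, Matrix.one_mul]
  · intro b₁ b₂
    set b₃ : Fin n → ℤ := fun i => (b₁ i + b₂ i) % M i with hb₃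
    set D := Matrix.diagonal (fun i => (M i : ℝ))
    -- the correction vector
    have hv : Gc.mulVec ((fun i => (b₃ i : ℝ)) - (fun i => (b₁ i : ℝ))
        - (fun i => (b₂ i : ℝ))) ∈ lat (Gc * D) := by
      refine ⟨fun i => -((b₁ i + b₂ i) / M i), ?_⟩
      rw [← Matrix.mulVec_mulVec]
      have hvec : ((fun i => (b₃ i : ℝ)) - (fun i => (b₁ i : ℝ))
          - (fun i => (b₂ i : ℝ)))
          = D.mulVec (fun i => ((-((b₁ i + b₂ i) / M i) : ℤ) : ℝ)) := by
        funext i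
        have hd : D.mulVec (fun i => ((-((b₁ i + b₂ i) / M i) : ℤ) : ℝ)) i
            = (M i : ℝ) * ((-((b₁ i + b₂ i) / M i) : ℤ) : ℝ) := by
          simp [D, Matrix.mulVec_diagonal]
        rw [hd]
        have hmod := Int.emod_def (b₁ i + b₂ i) (M i)
        simp only [Pi.sub_apply, hb₃]
        push_cast [hmod]
        ring
      rw [hvec]
    have h1 := (henc b₁).2
    have h2 := (henc b₂).2
    have h3 := (henc b₃).2
    have key : enc b₃ - (enc b₁ + enc b₂)
        = (enc b₃ - Gc.mulVec (fun i => (b₃ i : ℝ)))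
          + (-(enc b₁ - Gc.mulVec (fun i => (b₁ i : ℝ))))
          + (-(enc b₂ - Gc.mulVec (fun i => (b₂ i : ℝ))))
          + Gc.mulVec ((fun i => (b₃ i : ℝ)) - (fun i => (b₁ i : ℝ))
            - (fun i => (b₂ i : ℝ))) := by
      simp only [Matrix.mulVec_sub]
      abel
    rw [key]
    exact lat_add (lat_add (lat_add h3 (lat_neg h1)) (lat_neg h2)) hv
end
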